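/- Let f : ℂ → ℂ belong to OM₊ and suppose f is not identically zero on the slit plane ℂ ∖ (−∞,0]. Then: (1) f(z) ∈ ℂ ∖ (−∞,0] for every z ∈ ℂ ∖ (−∞,0], so that S(w) := Log f(e^w) − w/2 is well defined for w ∈ D; (2) S is analytic on D; (3) |Im S(w)| ≤ (1/2)·Im w for every w ∈ D with Im w ≥ 0; and (4) f(z) = √z · exp(S(Log z)) for every z ∈ ℂ ∖ (−∞,0]. -/

import Mathlib

open Complex MeasureTheory Filter

noncomputable section

/-- The open horizontal strip `D = {w : ℂ | -π < Im w < π}`. -/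
def strip : Set ℂ := {w : ℂ | -Real.pi < w.im ∧ w.im < Real.pi}

/-- The class `OM₊`: functions analytic on the slit plane `ℂ \ (-∞,0]`,
nonnegative real on the positive real axis, with nonnegative imaginary part
on the upper half-plane. -/
def OMplus (f : ℂ → ℂ) : Prop :=
  DifferentiableOn ℂ f Complex.slitPlane ∧
  (∀ x : ℝ, 0 < x → ∃ t : ℝ, 0 ≤ t ∧ f (x : ℂ) = (t : ℂ)) ∧
  (∀ z : ℂ, 0 < z.im → 0 ≤ (f z).im)

section Auxiliary

open Set Topology

lemma hasDerivAt_conj_reflect {f : ℂ → ℂ} {f' z : ℂ}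
    (h : HasDerivAt f f' ((starRingEnd ℂ) z)) :
    HasDerivAt (fun w => (starRingEnd ℂ) (f ((starRingEnd ℂ) w))) ((starRingEnd ℂ) f') z := by
  rw [hasDerivAt_iff_tendsto_slope] at h ⊢
  have h1 : Tendsto (starRingEnd ℂ) (𝓝[≠] z) (𝓝[≠] ((starRingEnd ℂ) z)) := by
    refine ContinuousWithinAt.tendsto_nhdsWithin
      (Complex.continuous_conj.continuousWithinAt) (fun w hw => ?_)
    simp only [mem_compl_iff, mem_singleton_iff] at hw ⊢
    exact fun hc => hw ((starRingEnd ℂ).injective hc)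
  have h2 := (Complex.continuous_conj.tendsto f').comp (h.comp h1)
  refine h2.congr (fun w => ?_)
  simp only [Function.comp_apply, slope_def_field, map_div₀, map_sub, Complex.conj_conj]

lemma isPreconnected_slitPlane : IsPreconnected Complex.slitPlane := by
  have hpc : IsPathConnected Complex.slitPlane := by
    refine isPathConnected_iff.mpr ⟨⟨1, Complex.one_mem_slitPlane⟩, fun x hx y hy => ?_⟩
    exact (JoinedIn.of_segment_subset
        (Complex.starConvex_one_slitPlane.segment_subset hx)).symm.trans
      (JoinedIn.of_segment_subset (Complex.starConvex_one_slitPlane.segment_subset hy))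
  exact hpc.isConnected.isPreconnected

lemma conj_mem_slitPlane {z : ℂ} (hz : z ∈ Complex.slitPlane) :
    (starRingEnd ℂ) z ∈ Complex.slitPlane := by
  rw [Complex.mem_slitPlane_iff] at hz ⊢
  simpa using hz

lemma exp_mem_slitPlane {w : ℂ} (h1 : -Real.pi < w.im) (h2 : w.im < Real.pi) :
    Complex.exp w ∈ Complex.slitPlane := by
  rw [Complex.mem_slitPlane_iff]
  rcases eq_or_ne w.im 0 with h0 | h0
  · left; rw [Complex.exp_re, h0]
    simpa using Real.exp_pos w.re
  · right; rw [Complex.exp_im]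
    refine mul_ne_zero (ne_of_gt (Real.exp_pos _)) ?_
    rcases lt_or_gt_of_ne h0 with hn | hp
    · exact ne_of_lt (Real.sin_neg_of_neg_of_neg_pi_lt hn h1)
    · exact ne_of_gt (Real.sin_pos_of_pos_of_lt_pi hp h2)

lemma ofReal_eq_self_of_im_zero {z : ℂ} (h : z.im = 0) : ((z.re : ℝ) : ℂ) = z :=
  Complex.ext (by simp) (by simp [h])

lemma reflect_eq {f : ℂ → ℂ} (hf : OMplus f) :
    ∀ z ∈ Complex.slitPlane, f ((starRingEnd ℂ) z) = (starRingEnd ℂ) (f z) := by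
  set g : ℂ → ℂ := fun w => (starRingEnd ℂ) (f ((starRingEnd ℂ) w)) with hg
  have hganal : AnalyticOnNhd ℂ g Complex.slitPlane := by
    refine DifferentiableOn.analyticOnNhd (fun z hz => ?_) Complex.isOpen_slitPlane
    have hfz : DifferentiableAt ℂ f ((starRingEnd ℂ) z) :=
      hf.1.differentiableAt (Complex.isOpen_slitPlane.mem_nhds (conj_mem_slitPlane hz))
    exact (hasDerivAt_conj_reflect hfz.hasDerivAt).differentiableAt.differentiableWithinAt
  have hfanal : AnalyticOnNhd ℂ f Complex.slitPlane :=
    hf.1.analyticOnNhd Complex.isOpen_slitPlane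
  have key : ∀ x : ℝ, 0 < x → f ((x : ℝ) : ℂ) = g ((x : ℝ) : ℂ) := by
    intro x hx
    obtain ⟨t, _, ht⟩ := hf.2.1 x hx
    rw [hg]
    show f _ = (starRingEnd ℂ) (f ((starRingEnd ℂ) _))
    rw [Complex.conj_ofReal x, ht, Complex.conj_ofReal]
  have hfreq : ∃ᶠ z in 𝓝[≠] (1 : ℂ), f z = g z := by
    have hr : Tendsto (fun n : ℕ => 1 + ((n : ℝ) + 1)⁻¹) atTop (𝓝 1) := by
      have h0 : Tendsto (fun n : ℕ => ((n : ℝ) + 1)⁻¹) atTop (𝓝 0) := by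
        simpa [one_div] using tendsto_one_div_add_atTop_nhds_zero_nat (𝕜 := ℝ)
      simpa using tendsto_const_nhds.add h0
    have ht : Tendsto (fun n : ℕ => ((1 + ((n : ℝ) + 1)⁻¹ : ℝ) : ℂ)) atTop (𝓝[≠] (1 : ℂ)) := by
      refine tendsto_nhdsWithin_of_tendsto_nhds_of_eventually_within _ ?_ ?_
      · simpa only [Function.comp_def, Complex.ofReal_one] using
          (Complex.continuous_ofReal.tendsto 1).comp hr
      · refine Eventually.of_forall (fun n => ?_)
        simp only [mem_compl_iff, mem_singleton_iff]
        intro hc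
        rw [show (1 : ℂ) = ((1 : ℝ) : ℂ) by norm_num, Complex.ofReal_inj] at hc
        have h0 : ((n : ℝ) + 1)⁻¹ = 0 := by linarith
        exact absurd h0 (by positivity)
    refine ht.frequently (Eventually.of_forall (fun n => key _ (by positivity))).frequently
  have heq := hfanal.eqOn_of_preconnected_of_frequently_eq hganal isPreconnected_slitPlane
    Complex.one_mem_slitPlane hfreq
  intro z hz
  have h2 := heq (conj_mem_slitPlane hz)
  rw [hg] at h2
  simpa only [Complex.conj_conj] using h2

lemma maps_slitPlane {f : ℂ → ℂ} (hf : OMplus f)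
    (hne : ∃ z ∈ Complex.slitPlane, f z ≠ 0) :
    ∀ z ∈ Complex.slitPlane, f z ∈ Complex.slitPlane := by
  have hfanal : AnalyticOnNhd ℂ f Complex.slitPlane :=
    hf.1.analyticOnNhd Complex.isOpen_slitPlane
  by_cases hc : ∃ c, ∀ z ∈ Complex.slitPlane, f z = c
  · obtain ⟨c, hcc⟩ := hc
    obtain ⟨z₀, hz₀, hz₀ne⟩ := hne
    have hc1 : f 1 = c := hcc 1 Complex.one_mem_slitPlane
    obtain ⟨t, ht0, ht⟩ := hf.2.1 1 one_pos
    rw [Complex.ofReal_one] at ht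
    have hcr : c = (t : ℂ) := by rw [← hc1, ht]
    have hcne : c ≠ 0 := by rw [← hcc z₀ hz₀]; exact hz₀ne
    have htpos : 0 < t := by
      rcases ht0.lt_or_eq with h | h
      · exact h
      · exact absurd (by rw [hcr, ← h]; norm_num) hcne
    intro z hz
    rw [hcc z hz, hcr]
    exact Complex.ofReal_mem_slitPlane.mpr htpos
  · have hopen : ∀ s ⊆ Complex.slitPlane, IsOpen s → IsOpen (f '' s) := by
      rcases hfanal.is_constant_or_isOpen isPreconnected_slitPlane with h | h
      · exact absurd h hc
      · exact h
    have hup : ∀ z : ℂ, 0 < z.im → 0 < (f z).im := by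
      set U : Set ℂ := {z : ℂ | 0 < z.im} with hU
      have hUopen : IsOpen U := isOpen_lt continuous_const continuous_im
      have hUsub : U ⊆ Complex.slitPlane := fun z hz =>
        Complex.mem_slitPlane_iff.mpr (Or.inr (ne_of_gt hz))
      have himg : IsOpen (f '' U) := hopen U hUsub hUopen
      intro z hz
      by_contra hle
      push_neg at hle
      have him0 : (f z).im = 0 := le_antisymm hle (hf.2.2 z hz)
      obtain ⟨ε, hε, hball⟩ := Metric.isOpen_iff.mp himg (f z) ⟨z, hz, rfl⟩
      have hmem : f z - (ε / 2) * Complex.I ∈ f '' U := by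
        apply hball
        simp only [Metric.mem_ball, dist_eq_norm]
        rw [show f z - (ε/2) * Complex.I - f z = -((ε/2) * Complex.I) by ring]
        rw [norm_neg]
        simp [abs_of_pos hε]
        linarith
      obtain ⟨w, hw, hfw⟩ := hmem
      have : 0 ≤ (f w).im := hf.2.2 w hw
      rw [hfw] at this
      simp only [Complex.sub_im, Complex.mul_im, Complex.I_im, Complex.I_re] at this
      simp only [him0] at this
      norm_num at this
      nlinarith [this]
    have hlow : ∀ z : ℂ, z.im < 0 → (f z).im < 0 := by
      intro z hz
      have hzslit : z ∈ Complex.slitPlane := Complex.mem_slitPlane_iff.mpr (Or.inr (ne_of_lt hz))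
      have hconj := reflect_eq hf ((starRingEnd ℂ) z) (conj_mem_slitPlane hzslit)
      rw [Complex.conj_conj] at hconj
      have h1 : 0 < ((starRingEnd ℂ) z).im := by simpa using hz
      have h2 := hup _ h1
      rw [hconj]
      simpa using h2
    have hpos : ∀ x : ℝ, 0 < x → f ((x : ℝ) : ℂ) ≠ 0 := by
      intro x hx h0
      have hballsub : Metric.ball ((x : ℝ) : ℂ) x ⊆ Complex.slitPlane := by
        intro w hw
        refine Complex.mem_slitPlane_iff.mpr (Or.inl ?_)
        have h1 : |w.re - x| ≤ ‖w - (x:ℂ)‖ := by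
          simpa using Complex.abs_re_le_norm (w - (x:ℂ))
        rw [Metric.mem_ball, Complex.dist_eq] at hw
        have := abs_lt.mp (lt_of_le_of_lt h1 hw)
        linarith [this.1]
      have himg : IsOpen (f '' Metric.ball ((x : ℝ) : ℂ) x) :=
        hopen _ hballsub Metric.isOpen_ball
      have h0mem : (0 : ℂ) ∈ f '' Metric.ball ((x : ℝ) : ℂ) x := by
        refine ⟨(x : ℂ), ?_, h0⟩
        simp [Metric.mem_ball, hx]
      obtain ⟨ε, hε, hball⟩ := Metric.isOpen_iff.mp himg 0 h0mem
      have hmem : (-(ε / 2) : ℂ) ∈ f '' Metric.ball ((x : ℝ) : ℂ) x := by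
        apply hball
        simp only [Metric.mem_ball, dist_zero_right]
        have hcast : (-(ε / 2) : ℂ) = ((-(ε / 2) : ℝ) : ℂ) := by push_cast; ring
        rw [hcast, Complex.norm_real, Real.norm_eq_abs, abs_of_neg (by linarith)]
        linarith
      obtain ⟨w, hw, hfw⟩ := hmem
      have himfw : (f w).im = 0 := by rw [hfw]; simp
      rcases lt_trichotomy w.im 0 with h | h | h
      · exact absurd himfw (ne_of_lt (hlow w h))
      · have hwre : 0 < w.re := by
          have := hballsub hw
          rcases Complex.mem_slitPlane_iff.mp this with h' | h'
          · exact h'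
          · exact absurd h h'
        obtain ⟨t, ht0, ht⟩ := hf.2.1 w.re hwre
        rw [ofReal_eq_self_of_im_zero h] at ht
        rw [ht] at hfw
        have : t = -(ε/2) := by exact_mod_cast hfw
        linarith
      · exact absurd himfw (ne_of_gt (hup w h))
    intro z hz
    rcases lt_trichotomy z.im 0 with h | h | h
    · exact Complex.mem_slitPlane_iff.mpr (Or.inr (ne_of_lt (hlow z h)))
    · have hzre : 0 < z.re := by
        rcases Complex.mem_slitPlane_iff.mp hz with h' | h'
        · exact h'
        · exact absurd h h'
      obtain ⟨t, ht0, ht⟩ := hf.2.1 z.re hzre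
      rw [ofReal_eq_self_of_im_zero h] at ht
      have htpos : 0 < t := by
        rcases ht0.lt_or_eq with h' | h'
        · exact h'
        · exfalso
          apply hpos z.re hzre
          rw [ofReal_eq_self_of_im_zero h, ht, ← h']
          norm_num
      rw [ht]
      exact Complex.ofReal_mem_slitPlane.mpr htpos
    · exact Complex.mem_slitPlane_iff.mpr (Or.inr (ne_of_gt (hup z h)))

lemma arg_f_exp_eq_zero {f : ℂ → ℂ} (hf : OMplus f)
    {z : ℂ} (hz : z.im = 0) : (f (Complex.exp z)).arg = 0 := by
  have hz' : Complex.exp z = ((Real.exp z.re : ℝ) : ℂ) := by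
    rw [Complex.ofReal_exp, ofReal_eq_self_of_im_zero hz]
  obtain ⟨t, ht0, ht⟩ := hf.2.1 (Real.exp z.re) (Real.exp_pos _)
  rw [hz', ht]
  exact Complex.arg_ofReal_of_nonneg ht0

lemma arg_le_im {f : ℂ → ℂ} (hf : OMplus f)
    (h1 : ∀ z ∈ Complex.slitPlane, f z ∈ Complex.slitPlane) :
    ∀ w : ℂ, 0 ≤ w.im → w.im < Real.pi → (f (Complex.exp w)).arg ≤ w.im := by
  set g : ℂ → ℂ := fun w => Complex.exp (-Complex.I * (Complex.log (f (Complex.exp w)) - w))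
    with hg
  have hnorm : ∀ w : ℂ, ‖g w‖ = Real.exp ((f (Complex.exp w)).arg - w.im) := by
    intro w
    rw [hg]
    simp only [Complex.norm_exp]
    congr 1
    simp [Complex.mul_re, Complex.log_im]
  have hdiff : ∀ w : ℂ, -Real.pi < w.im → w.im < Real.pi →
      DifferentiableAt ℂ g w := by
    intro w hw1 hw2
    have he : Complex.exp w ∈ Complex.slitPlane := exp_mem_slitPlane hw1 hw2
    have hfe : DifferentiableAt ℂ f (Complex.exp w) :=
      hf.1.differentiableAt (Complex.isOpen_slitPlane.mem_nhds he)
    have h2 : DifferentiableAt ℂ (fun u => f (Complex.exp u)) w :=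
      hfe.comp w Complex.differentiable_exp.differentiableAt
    have h3 : DifferentiableAt ℂ (fun u => Complex.log (f (Complex.exp u))) w :=
      DifferentiableAt.comp (g := Complex.log) w (Complex.differentiableAt_log (h1 _ he)) h2
    exact ((h3.sub differentiableAt_id).const_mul _).cexp
  have main : ∀ b : ℝ, 0 < b → b < Real.pi → ∀ w : ℂ, 0 ≤ w.im → w.im ≤ b →
      (f (Complex.exp w)).arg - w.im ≤ Real.pi - b := by
    intro b hb0 hbπ w hw0 hwb
    have hfd : DiffContOnCl ℂ g (Complex.im ⁻¹' Ioo 0 b) := by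
      constructor
      · intro u hu
        exact (hdiff u (by linarith [hu.1, Real.pi_pos]) (by linarith [hu.2])
          ).differentiableWithinAt
      · refine ContinuousOn.mono (s := Complex.im ⁻¹' Icc 0 b) ?_
          (closure_minimal (preimage_mono Ioo_subset_Icc_self)
            (isClosed_Icc.preimage Complex.continuous_im))
        intro u hu
        exact (hdiff u (by linarith [hu.1, Real.pi_pos]) (by linarith [hu.2])
          ).continuousAt.continuousWithinAt
    have hB : ∃ c < Real.pi / (b - 0), ∃ B,
        g =O[Filter.comap (_root_.abs ∘ Complex.re) Filter.atTop ⊓ 𝓟 (Complex.im ⁻¹' Ioo 0 b)]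
          fun z => Real.exp (B * Real.exp (c * |z.re|)) := by
      refine ⟨0, by rw [sub_zero]; positivity, 2 * Real.pi, Asymptotics.isBigO_iff.mpr ⟨1, ?_⟩⟩
      refine Filter.eventually_inf_principal.mpr (Eventually.of_forall fun z hz => ?_)
      rw [hnorm z, one_mul]
      have harg := Complex.arg_le_pi (f (Complex.exp z))
      have him : (0 : ℝ) < z.im := hz.1
      have hb : (f (Complex.exp z)).arg - z.im ≤ 2 * Real.pi * Real.exp (0 * |z.re|) := by
        rw [zero_mul, Real.exp_zero, mul_one]
        nlinarith [Real.pi_pos]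
      calc Real.exp ((f (Complex.exp z)).arg - z.im)
          ≤ Real.exp (2 * Real.pi * Real.exp (0 * |z.re|)) := Real.exp_le_exp.mpr hb
        _ ≤ ‖Real.exp (2 * Real.pi * Real.exp (0 * |z.re|))‖ := le_abs_self _
    have hle_a : ∀ z : ℂ, z.im = 0 → ‖g z‖ ≤ Real.exp (Real.pi - b) := by
      intro z hz
      rw [hnorm z, hz, arg_f_exp_eq_zero hf hz, sub_zero, Real.exp_zero]
      rw [← Real.exp_zero]
      exact Real.exp_le_exp.mpr (by linarith)
    have hle_b : ∀ z : ℂ, z.im = b → ‖g z‖ ≤ Real.exp (Real.pi - b) := by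
      intro z hz
      rw [hnorm z, hz]
      exact Real.exp_le_exp.mpr (by linarith [Complex.arg_le_pi (f (Complex.exp z))])
    have := PhragmenLindelof.horizontal_strip (a := 0) (b := b)
      (C := Real.exp (Real.pi - b)) (f := g) (z := w) hfd hB hle_a hle_b hw0 hwb
    rw [hnorm w] at this
    exact Real.exp_le_exp.mp this
  intro w hw0 hwπ
  rcases eq_or_lt_of_le hw0 with h | h
  · rw [arg_f_exp_eq_zero hf h.symm, ← h]
  · refine le_of_forall_pos_le_add (fun ε hε => ?_)
    set b : ℝ := max w.im (Real.pi - ε) with hb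
    have hb0 : 0 < b := lt_of_lt_of_le h (le_max_left _ _)
    have hbπ : b < Real.pi := max_lt hwπ (by linarith [Real.pi_pos])
    have := main b hb0 hbπ w hw0 (le_max_left _ _)
    have h2 : Real.pi - ε ≤ b := le_max_right _ _
    linarith

end Auxiliary

/-- For `f ∈ OM₊` not identically zero: `f` maps the slit plane into itself,
`S(w) = Log f(e^w) - w/2` is analytic on the strip `D`, satisfies
`|Im S(w)| ≤ Im w / 2` on the upper half of the strip, and
`f(z) = √z · exp (S (Log z))` on the slit plane. -/
theorem stmt_2 (f : ℂ → ℂ) (hf : OMplus f)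
    (hne : ∃ z ∈ Complex.slitPlane, f z ≠ 0)
    (S : ℂ → ℂ) (hS : ∀ w ∈ strip, S w = Complex.log (f (Complex.exp w)) - w / 2) :
    (∀ z ∈ Complex.slitPlane, f z ∈ Complex.slitPlane) ∧
    DifferentiableOn ℂ S strip ∧
    (∀ w ∈ strip, 0 ≤ w.im → |(S w).im| ≤ w.im / 2) ∧
    (∀ z ∈ Complex.slitPlane, f z = z ^ (1 / 2 : ℂ) * Complex.exp (S (Complex.log z))) := by
  have h1 : ∀ z ∈ Complex.slitPlane, f z ∈ Complex.slitPlane := maps_slitPlane hf hne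
  have him2 : ∀ w : ℂ, (w / 2).im = w.im / 2 := fun w => by
    rw [show (2:ℂ) = ((2:ℝ):ℂ) by norm_num, Complex.div_ofReal_im]
  refine ⟨h1, ?_, ?_, ?_⟩
  · -- differentiability of S on the strip
    refine DifferentiableOn.congr (f := fun w => Complex.log (f (Complex.exp w)) - w / 2)
      (fun w hw => ?_) hS
    obtain ⟨hw1, hw2⟩ := hw
    have he : Complex.exp w ∈ Complex.slitPlane := exp_mem_slitPlane hw1 hw2
    have hfe : DifferentiableAt ℂ f (Complex.exp w) :=
      hf.1.differentiableAt (Complex.isOpen_slitPlane.mem_nhds he)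
    have h2 : DifferentiableAt ℂ (fun u => f (Complex.exp u)) w :=
      hfe.comp w Complex.differentiable_exp.differentiableAt
    have h3 : DifferentiableAt ℂ (fun u => Complex.log (f (Complex.exp u))) w :=
      DifferentiableAt.comp (g := Complex.log) w (Complex.differentiableAt_log (h1 _ he)) h2
    exact (h3.sub (differentiableAt_id.div_const 2)).differentiableWithinAt
  · -- imaginary part bound
    intro w hw hw0
    obtain ⟨hw1, hw2⟩ := hw
    rw [hS w ⟨hw1, hw2⟩]
    have hSim : (Complex.log (f (Complex.exp w)) - w / 2).im
        = (f (Complex.exp w)).arg - w.im / 2 := by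
      rw [Complex.sub_im, Complex.log_im, him2]
    rw [hSim]
    have hupper : (f (Complex.exp w)).arg ≤ w.im := arg_le_im hf h1 w hw0 hw2
    have hlower : 0 ≤ (f (Complex.exp w)).arg := by
      rcases eq_or_lt_of_le hw0 with h | h
      · rw [arg_f_exp_eq_zero hf h.symm]
      · refine Complex.arg_nonneg_iff.mpr (hf.2.2 _ ?_)
        rw [Complex.exp_im]
        exact mul_pos (Real.exp_pos _) (Real.sin_pos_of_pos_of_lt_pi h hw2)
    rw [abs_le]
    constructor <;> linarith
  · -- the representation formula
    intro z hz
    have hz0 : z ≠ 0 := Complex.slitPlane_ne_zero hz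
    have hlogmem : Complex.log z ∈ strip := by
      refine ⟨?_, ?_⟩ <;> rw [Complex.log_im]
      · exact Complex.neg_pi_lt_arg z
      · exact lt_of_le_of_ne (Complex.arg_le_pi z) (Complex.slitPlane_arg_ne_pi hz)
    have hfz : f z ≠ 0 := Complex.slitPlane_ne_zero (h1 z hz)
    rw [hS _ hlogmem, Complex.exp_log hz0, Complex.exp_sub, Complex.exp_log hfz]
    rw [Complex.cpow_def_of_ne_zero hz0, show Complex.log z * (1/2 : ℂ) = Complex.log z / 2
      by ring]
    rw [mul_comm, div_mul_cancel₀ _ (Complex.exp_ne_zero _)]
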